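/- Let V be a finite nonempty set, let H : V → V → ℝ be row-stochastic, and let μ be a stationary distribution of H satisfying the reversibility condition μ(v)H(v,w) = μ(w)H(w,v) for all v,w ∈ V. Consider the synchronous pull voter model with agnostic states (S_t)_{t≥0} with matrix H started from initial configuration s₀ ∈ {0,1,2}^V, and suppose that with probability 1 the process eventually reaches a monochromatic configuration (all vertices in state 1 or all vertices in state 2). Then ℙ(the process reaches the all-red configuration) = Σ_{v∈V} μ(v)·ℙ(R(v) | S_0 = s₀). -/

import Mathlib

open MeasureTheory Finset
open scoped ENNReal

variable {V : Type} [Fintype V] [DecidableEq V]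

/-- Result of vertex `v` pulling from vertex `w` in configuration `s`:
if `w` is gnostic, `v` copies `w`'s colour; otherwise `v` keeps its own state. -/
def pullResult (s : V → Fin 3) (v w : V) : Fin 3 :=
  if s w = 0 then s v else s w

/-- One-step transition probability of the synchronous pull voter model with agnostic
states: every vertex `v` independently selects `w` with probability `H v w` and pulls. -/
noncomputable def syncKernel (H : V → V → ℝ) (s s' : V → Fin 3) : ℝ :=
  ∏ v : V, ∑ w : V, if pullResult s v w = s' v then H v w else 0

/-- One-step transition probability of the asynchronous pull voter model: a single
vertex `v` chosen uniformly at random selects `w` with probability `H v w` and pulls. -/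
noncomputable def asyncKernel (H : V → V → ℝ) (s s' : V → Fin 3) : ℝ :=
  ∑ v : V, ∑ w : V,
    if Function.update s v (pullResult s v w) = s' then H v w / (Fintype.card V) else 0

/-- `S` is a voter-model process with one-step kernel `K` started at `s₀`:
the `S t` are measurable, `S 0 = s₀` surely, and the Markov property holds. -/
def IsVoterProcess {Ω : Type} [MeasurableSpace Ω] (P : Measure Ω)
    (K : (V → Fin 3) → (V → Fin 3) → ℝ)
    (S : ℕ → Ω → (V → Fin 3)) (s₀ : V → Fin 3) : Prop :=
  (∀ t, Measurable (S t)) ∧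
  (∀ ω, S 0 ω = s₀) ∧
  ∀ (t : ℕ) (h : ℕ → (V → Fin 3)) (s' : V → Fin 3),
    P {ω | (∀ i ≤ t, S i ω = h i) ∧ S (t + 1) ω = s'}
      = P {ω | ∀ i ≤ t, S i ω = h i} * ENNReal.ofReal (K (h t) s')

/-- The event that the colour of `v` at the first time it is gnostic is red. -/
def redEvent {Ω : Type} (S : ℕ → Ω → (V → Fin 3)) (v : V) : Set Ω :=
  {ω | ∃ t, (∀ t' < t, S t' ω v = 0) ∧ S t ω v = 1}

/-- First time the configuration satisfies `Q` (`∞` if never). -/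
noncomputable def hitTime {Ω : Type} (S : ℕ → Ω → (V → Fin 3))
    (Q : (V → Fin 3) → Prop) (ω : Ω) : ℝ≥0∞ :=
  ⨅ t ∈ {t : ℕ | Q (S t ω)}, (t : ℝ≥0∞)

/-!
Write `A_t = ∑_v μ(v) ℙ(S_t(v) = 1)` for the expected `μ`-weight of red. In one synchronous
round a gnostic vertex pulling from a gnostic neighbour moves red weight along the edge, and by
reversibility these moves balance in expectation; a pull from an agnostic vertex changes nothing.
So `A_{t+1} - A_t` is exactly the `μ`-weight of vertices that are agnostic at time `t` and red
at time `t + 1`, i.e. that become gnostic at `t + 1` with colour red (gnostic vertices never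
become agnostic again). Summing, `A_t = ∑_v μ(v) ℙ(R(v) by time t)`. As `t → ∞` the right
side tends to `∑_v μ(v) ℙ(R(v))`, and, monochromatic configurations being absorbing and reached
almost surely, `ℙ(S_t(v) = 1)` tends to the probability of red consensus.
-/

open Filter Topology Function

theorem Finset.sum_sum_mul_sub_eq_zero_of_symm {ι R : Type*} [Fintype ι] [CommRing R]
    {a : ι → ι → R} (ha : ∀ i j, a i j = a j i) (f : ι → R) :
    ∑ i, ∑ j, a i j * (f j - f i) = 0 := by
  have hswap : ∑ i, ∑ j, a i j * f j = ∑ i, ∑ j, a i j * f i := by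
    rw [Finset.sum_comm]
    exact Finset.sum_congr rfl fun i _ => Finset.sum_congr rfl fun j _ => by rw [ha]
  simp only [mul_sub, Finset.sum_sub_distrib, hswap, sub_self]

lemma pullResult_ne_zero {V : Type} {s : V → Fin 3} {v : V} (w : V) (hv : s v ≠ 0) :
    pullResult s v w ≠ 0 := by
  unfold pullResult; split_ifs <;> assumption

lemma pullResult_of_forall_eq {V : Type} {s : V → Fin 3} {c : Fin 3} (hc : c ≠ 0)
    (hs : ∀ u, s u = c) (v w : V) : pullResult s v w = c := by
  simp [pullResult, hs, hc]

section Kernel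

variable {V : Type} [Fintype V] {H : V → V → ℝ}

lemma syncKernel_nonneg (hH0 : ∀ v w, 0 ≤ H v w) (s s' : V → Fin 3) :
    0 ≤ syncKernel H s s' :=
  Finset.prod_nonneg fun v _ => Finset.sum_nonneg fun w _ => by split_ifs <;> simp [hH0]

lemma syncKernel_eq_zero_of_forall_ne {s s' : V → Fin 3} {v : V}
    (h : ∀ w, pullResult s v w ≠ s' v) : syncKernel H s s' = 0 :=
  Finset.prod_eq_zero (Finset.mem_univ v) (Finset.sum_eq_zero fun w _ => if_neg (h w))

lemma apply_ne_zero_of_syncKernel_ne_zero {s s' : V → Fin 3} (hK : syncKernel H s s' ≠ 0)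
    {v : V} (hv : s v ≠ 0) : s' v ≠ 0 := fun h0 =>
  hK (syncKernel_eq_zero_of_forall_ne fun w => h0 ▸ pullResult_ne_zero w hv)

lemma forall_eq_of_syncKernel_ne_zero {s s' : V → Fin 3} (hK : syncKernel H s s' ≠ 0)
    {c : Fin 3} (hc : c ≠ 0) (hs : ∀ u, s u = c) (v : V) : s' v = c := by
  by_contra hv
  exact hK (syncKernel_eq_zero_of_forall_ne fun w => by
    rw [pullResult_of_forall_eq hc hs]; exact Ne.symm hv)

-- `syncKernel H s` is the product of the one-vertex laws `k u` below, each of total mass one;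
-- so its marginal at `v` is the law of `pullResult s v w` with `w ~ H v`.
lemma sum_syncKernel_mul_apply [DecidableEq V] (hH1 : ∀ v, ∑ w, H v w = 1) (s : V → Fin 3)
    (v : V) (g : Fin 3 → ℝ) :
    ∑ s', syncKernel H s s' * g (s' v) = ∑ w, H v w * g (pullResult s v w) := by
  set k : V → Fin 3 → ℝ := fun u c => ∑ w, if pullResult s u w = c then H u w else 0
  have hk : ∀ u (g : Fin 3 → ℝ),
      ∑ c, k u c * g c = ∑ w, H u w * g (pullResult s u w) := by
    intro u g
    simp only [k, Finset.sum_mul, ite_mul, zero_mul]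
    rw [Finset.sum_comm]
    simp
  calc ∑ s', syncKernel H s s' * g (s' v)
      = ∑ s' : V → Fin 3, ∏ u, k u (s' u) * (if u = v then g (s' u) else 1) := by
        refine Finset.sum_congr rfl fun s' _ => ?_
        simp only [Finset.prod_mul_distrib, Finset.prod_ite_eq', Finset.mem_univ, if_true]
        rfl
    _ = ∏ u, ∑ c, k u c * (if u = v then g c else 1) :=
        (Fintype.prod_sum fun u c => k u c * if u = v then g c else 1).symm
    _ = ∑ c, k v c * g c := by
        rw [Finset.prod_eq_single v (fun u _ hu => by simpa [hu, hH1] using hk u 1) (by simp)]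
        simp
    _ = _ := hk v g

-- For agnostic `v` the three indicators cancel. A gnostic `v` changes colour only by pulling
-- from a gnostic `w`, which leaves the antisymmetric sum `∑ μ v H v w (f w - f v)` over gnostic
-- pairs; it vanishes because `μ v H v w` is symmetric.
lemma sum_mul_sum_syncKernel_redDrift_eq_zero [DecidableEq V] {μ : V → ℝ}
    (hH1 : ∀ v, ∑ w, H v w = 1) (hrev : ∀ v w, μ v * H v w = μ w * H w v)
    (s : V → Fin 3) :
    ∑ v, μ v * ∑ s', syncKernel H s s' * ((if s' v = 1 then 1 else 0)
      - (if s v = 1 then 1 else 0) - (if s v = 0 ∧ s' v = 1 then 1 else 0)) = 0 := by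
  set f : V → ℝ := fun v => if s v = 1 then 1 else 0
  set a : V → V → ℝ := fun v w => if s v = 0 ∨ s w = 0 then 0 else μ v * H v w
  have hpull : ∀ v w, μ v * (H v w * ((if pullResult s v w = 1 then 1 else 0) - f v
      - (if s v = 0 ∧ pullResult s v w = 1 then 1 else 0))) = a v w * (f w - f v) := by
    intro v w
    simp only [a, f, pullResult]
    split_ifs <;> grind
  calc _ = ∑ v, ∑ w, μ v * (H v w * ((if pullResult s v w = 1 then 1 else 0) - f v
          - (if s v = 0 ∧ pullResult s v w = 1 then 1 else 0))) := by
        refine Finset.sum_congr rfl fun v _ => ?_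
        rw [← Finset.mul_sum]
        exact congrArg (μ v * ·) (sum_syncKernel_mul_apply hH1 s v fun c =>
          (if c = 1 then 1 else 0) - f v - (if s v = 0 ∧ c = 1 then 1 else 0))
    _ = ∑ v, ∑ w, a v w * (f w - f v) := by simp only [hpull]
    _ = 0 := Finset.sum_sum_mul_sub_eq_zero_of_symm
        (fun v w => by simp only [a, or_comm, hrev v w]) f

end Kernel

theorem MeasureTheory.measure_eq_sum_measure_preimage_singleton_inter {α β : Type*}
    [MeasurableSpace α] [MeasurableSpace β] [Fintype β] [MeasurableSingletonClass β]
    (μ : Measure α) {f : α → β} (hf : Measurable f) (A : Set α) :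
    μ A = ∑ b, μ (f ⁻¹' {b} ∩ A) := by
  have h := sum_measure_preimage_singleton (μ := μ.restrict A) Finset.univ
    fun b _ => hf (measurableSet_singleton b)
  rw [Finset.coe_univ, Set.preimage_univ, Measure.restrict_apply_univ] at h
  rw [← h]
  exact Finset.sum_congr rfl fun b _ => Measure.restrict_apply (hf (measurableSet_singleton b))

section Trajectories

variable {V Ω : Type} {S : ℕ → Ω → V → Fin 3}

def redFirstAt (S : ℕ → Ω → V → Fin 3) (v : V) (t : ℕ) : Set Ω :=
  {ω | (∀ t' < t, S t' ω v = 0) ∧ S t ω v = 1}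

lemma redEvent_eq_iUnion_redFirstAt (v : V) : redEvent S v = ⋃ t, redFirstAt S v t := by
  ext ω
  simp [redEvent, redFirstAt]

lemma pairwise_disjoint_redFirstAt (v : V) : Pairwise (Disjoint on redFirstAt S v) := by
  intro i j hij
  refine Set.disjoint_left.2 fun ω hi hj => ?_
  rcases hij.lt_or_gt with h | h
  · exact absurd (hj.1 i h) (by rw [hi.2]; decide)
  · exact absurd (hi.1 j h) (by rw [hj.2]; decide)

variable [MeasurableSpace Ω] {P : Measure Ω}

lemma measurableSet_redFirstAt (hmeas : ∀ t, Measurable (S t)) (v : V) (t : ℕ) :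
    MeasurableSet (redFirstAt S v t) :=
  measurableSet_setOfPred.2 (by fun_prop)

lemma tendsto_sum_measureReal_redFirstAt [IsFiniteMeasure P] (hmeas : ∀ t, Measurable (S t))
    (v : V) : Tendsto (fun n => ∑ t ∈ range n, P.real (redFirstAt S v t)) atTop
      (𝓝 (P.real (redEvent S v))) := by
  have hsum : HasSum (fun t => P (redFirstAt S v t)) (P (redEvent S v)) := by
    rw [redEvent_eq_iUnion_redFirstAt,
      measure_iUnion (pairwise_disjoint_redFirstAt v) (measurableSet_redFirstAt hmeas v)]
    exact ENNReal.summable.hasSum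
  have h := (ENNReal.tendsto_toReal (measure_ne_top P _)).comp hsum.tendsto_sum_nat
  simpa [Function.comp_def, ENNReal.toReal_sum, measureReal_def] using h

namespace IsVoterProcess

variable {K : (V → Fin 3) → (V → Fin 3) → ℝ} {s₀ : V → Fin 3}

-- The Markov property is stated for whole histories; summing it over all histories of length
-- `t` ending in `s` gives the one-step transition law.
lemma measure_step [Fintype V] [DecidableEq V] (hS : IsVoterProcess P K S s₀) (t : ℕ)
    (s s' : V → Fin 3) :
    P ({ω | S t ω = s} ∩ {ω | S (t + 1) ω = s'})
      = P {ω | S t ω = s} * ENNReal.ofReal (K s s') := by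
  set hist : Ω → Fin (t + 1) → V → Fin 3 := fun ω i => S i ω
  have hhist : Measurable hist := measurable_pi_lambda _ fun i => hS.1 i
  have hmarkov : ∀ g, P (hist ⁻¹' {g} ∩ {ω | S (t + 1) ω = s'})
      = P (hist ⁻¹' {g}) * ENNReal.ofReal (K (g (Fin.last t)) s') := by
    intro g
    let h : ℕ → V → Fin 3 := fun i =>
      if hi : i ≤ t then g ⟨i, Nat.lt_succ_of_le hi⟩ else s'
    have hcyl : hist ⁻¹' {g} = {ω | ∀ i ≤ t, S i ω = h i} := by
      ext ω
      simp only [Set.mem_preimage, Set.mem_singleton_iff, Set.mem_ofPred_eq]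
      constructor
      · rintro rfl i hi
        simp [h, hi, hist]
      · intro hω
        funext i
        simpa [h, dif_pos (Nat.lt_succ_iff.1 i.2)] using hω i (Nat.lt_succ_iff.1 i.2)
    rw [hcyl, ← show h t = g (Fin.last t) from dif_pos le_rfl]
    exact hS.2.2 t h s'
  have hlast : ∀ g, hist ⁻¹' {g} ∩ {ω | S t ω = s}
      = if g (Fin.last t) = s then hist ⁻¹' {g} else ∅ := by
    intro g
    split_ifs with hg
    · exact Set.inter_eq_left.2 fun ω hω => (congrFun hω (Fin.last t)).trans hg
    · exact Set.eq_empty_of_forall_notMem fun ω hω =>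
        hg ((congrFun hω.1 (Fin.last t)).symm.trans hω.2)
  rw [measure_eq_sum_measure_preimage_singleton_inter P hhist,
    measure_eq_sum_measure_preimage_singleton_inter P hhist {ω | S t ω = s}, Finset.sum_mul]
  refine Finset.sum_congr rfl fun g _ => ?_
  rw [← Set.inter_assoc, hlast]
  split_ifs with hg
  · rw [hmarkov, hg]
  · simp

lemma measureReal_setOf_step [Fintype V] [DecidableEq V] [IsFiniteMeasure P]
    (hS : IsVoterProcess P K S s₀) (hK0 : ∀ s s', 0 ≤ K s s') (t : ℕ)
    (Q : (V → Fin 3) → (V → Fin 3) → Prop) [∀ s s', Decidable (Q s s')] :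
    P.real {ω | Q (S t ω) (S (t + 1) ω)}
      = ∑ s, P.real {ω | S t ω = s} * ∑ s', K s s' * if Q s s' then 1 else 0 := by
  have hpair : Measurable fun ω => (S t ω, S (t + 1) ω) := (hS.1 t).prodMk (hS.1 (t + 1))
  have hset : {ω | Q (S t ω) (S (t + 1) ω)}
      = (fun ω => (S t ω, S (t + 1) ω)) ⁻¹'
          ↑(Finset.univ.filter fun p : (V → Fin 3) × (V → Fin 3) => Q p.1 p.2) := by
    ext ω
    simp
  rw [hset, ← sum_measureReal_preimage_singleton _ fun p _ => hpair (measurableSet_singleton p),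
    Finset.sum_filter, Fintype.sum_prod_type]
  refine Finset.sum_congr rfl fun s _ => ?_
  rw [Finset.mul_sum]
  refine Finset.sum_congr rfl fun s' _ => ?_
  split_ifs
  · have hfiber : (fun ω => (S t ω, S (t + 1) ω)) ⁻¹' {(s, s')}
        = {ω | S t ω = s} ∩ {ω | S (t + 1) ω = s'} := by
      ext ω
      simp
    rw [hfiber, measureReal_def, hS.measure_step, ENNReal.toReal_mul,
      ENNReal.toReal_ofReal (hK0 s s'), mul_one, measureReal_def]
  · simp

lemma ae_kernel_ne_zero [Fintype V] [DecidableEq V] [IsFiniteMeasure P]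
    (hS : IsVoterProcess P K S s₀) (hK0 : ∀ s s', 0 ≤ K s s') :
    ∀ᵐ ω ∂P, ∀ t, K (S t ω) (S (t + 1) ω) ≠ 0 := by
  refine ae_all_iff.2 fun t => ?_
  rw [ae_iff, ← measureReal_eq_zero_iff]
  simp only [not_not]
  rw [hS.measureReal_setOf_step hK0 t fun s s' => K s s' = 0]
  refine Finset.sum_eq_zero fun s _ => mul_eq_zero_of_right _ (Finset.sum_eq_zero fun s' _ => ?_)
  split_ifs with h <;> simp [h]

lemma ae_persistent [Fintype V] [DecidableEq V] [IsFiniteMeasure P]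
    (hS : IsVoterProcess P K S s₀) (hK0 : ∀ s s', 0 ≤ K s s') {q : (V → Fin 3) → Prop}
    (hq : ∀ s s', K s s' ≠ 0 → q s → q s') :
    ∀ᵐ ω ∂P, ∀ t t', t ≤ t' → q (S t ω) → q (S t' ω) := by
  filter_upwards [hS.ae_kernel_ne_zero hK0] with ω hω t t' htt' hqt
  induction t', htt' using Nat.le_induction with
  | base => exact hqt
  | succ n _ ih => exact hq _ _ (hω n) ih

end IsVoterProcess

end Trajectories

namespace IsVoterProcess

variable {V Ω : Type} [Fintype V] [DecidableEq V] [MeasurableSpace Ω] {P : Measure Ω}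
  [IsFiniteMeasure P] {S : ℕ → Ω → V → Fin 3} {s₀ : V → Fin 3} {H : V → V → ℝ}

-- Gnostic vertices stay gnostic, so being agnostic at time `t` means being agnostic up to `t`.
lemma measureReal_redFirstAt_succ (hS : IsVoterProcess P (syncKernel H) S s₀)
    (hH0 : ∀ v w, 0 ≤ H v w) (v : V) (t : ℕ) :
    P.real (redFirstAt S v (t + 1)) = P.real {ω | S t ω v = 0 ∧ S (t + 1) ω v = 1} := by
  refine measureReal_congr (eventuallyEq_set.2 ?_)
  filter_upwards [hS.ae_persistent (syncKernel_nonneg hH0) (q := fun s => s v ≠ 0)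
    fun s s' hK => apply_ne_zero_of_syncKernel_ne_zero hK] with ω hω
  simp only [redFirstAt, Set.mem_ofPred_eq, Nat.lt_succ_iff]
  refine and_congr_left fun _ => ⟨fun h => h t le_rfl, fun h u hu => ?_⟩
  by_contra hne
  exact hω u t hu hne h

lemma sum_mul_measureReal_red_succ_sub (hS : IsVoterProcess P (syncKernel H) S s₀)
    (hH0 : ∀ v w, 0 ≤ H v w) (hH1 : ∀ v, ∑ w, H v w = 1) {μ : V → ℝ}
    (hrev : ∀ v w, μ v * H v w = μ w * H w v) (t : ℕ) :
    ∑ v, μ v * (P.real {ω | S (t + 1) ω v = 1} - P.real {ω | S t ω v = 1})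
      = ∑ v, μ v * P.real {ω | S t ω v = 0 ∧ S (t + 1) ω v = 1} := by
  have hK0 := syncKernel_nonneg hH0
  have hlaw : ∀ v, P.real {ω | S (t + 1) ω v = 1} - P.real {ω | S t ω v = 1}
      - P.real {ω | S t ω v = 0 ∧ S (t + 1) ω v = 1}
      = ∑ s, P.real {ω | S t ω = s} * ∑ s', syncKernel H s s' * ((if s' v = 1 then 1 else 0)
          - (if s v = 1 then 1 else 0) - (if s v = 0 ∧ s' v = 1 then 1 else 0)) := by
    intro v
    have h1 := hS.measureReal_setOf_step hK0 t fun _ s' => s' v = 1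
    have h2 := hS.measureReal_setOf_step hK0 t fun s _ => s v = 1
    have h3 := hS.measureReal_setOf_step hK0 t fun s s' => s v = 0 ∧ s' v = 1
    beta_reduce at h1 h2 h3
    simp only [h1, h2, h3, ← Finset.sum_sub_distrib, ← mul_sub]
  rw [← sub_eq_zero, ← Finset.sum_sub_distrib]
  simp only [← mul_sub, hlaw, Finset.mul_sum]
  rw [Finset.sum_comm]
  refine Finset.sum_eq_zero fun s _ => ?_
  have h := congrArg (P.real {ω | S t ω = s} * ·)
    (sum_mul_sum_syncKernel_redDrift_eq_zero hH1 hrev s)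
  simp only [Finset.mul_sum, mul_zero] at h
  refine Eq.trans ?_ h
  exact Finset.sum_congr rfl fun _ _ => Finset.sum_congr rfl fun _ _ => mul_left_comm _ _ _

lemma sum_mul_measureReal_red_eq (hS : IsVoterProcess P (syncKernel H) S s₀)
    (hH0 : ∀ v w, 0 ≤ H v w) (hH1 : ∀ v, ∑ w, H v w = 1) {μ : V → ℝ}
    (hrev : ∀ v w, μ v * H v w = μ w * H w v) (t : ℕ) :
    ∑ v, μ v * P.real {ω | S t ω v = 1}
      = ∑ v, μ v * ∑ i ∈ range (t + 1), P.real (redFirstAt S v i) := by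
  induction t with
  | zero => simp [redFirstAt]
  | succ t ih =>
    have h := hS.sum_mul_measureReal_red_succ_sub hH0 hH1 hrev t
    simp only [mul_sub, Finset.sum_sub_distrib, ← hS.measureReal_redFirstAt_succ hH0] at h
    simp only [Finset.sum_range_succ _ (t + 1), mul_add, Finset.sum_add_distrib, ← ih]
    linarith

lemma tendsto_measureReal_red (hS : IsVoterProcess P (syncKernel H) S s₀)
    (hH0 : ∀ v w, 0 ≤ H v w)
    (hcons : ∀ᵐ ω ∂P, ∃ t, (∀ v, S t ω v = 1) ∨ (∀ v, S t ω v = 2)) (v : V) :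
    Tendsto (fun t => P.real {ω | S t ω v = 1}) atTop
      (𝓝 (P.real {ω | ∃ t, ∀ v, S t ω v = 1})) := by
  have hmeas := hS.1
  have habs : ∀ c : Fin 3, c ≠ 0 →
      ∀ᵐ ω ∂P, ∀ t t', t ≤ t' → (∀ u, S t ω u = c) → ∀ u, S t' ω u = c :=
    fun c hc => hS.ae_persistent (syncKernel_nonneg hH0) fun s s' hK hs =>
      forall_eq_of_syncKernel_ne_zero hK hc hs
  refine (ENNReal.tendsto_toReal (measure_ne_top P _)).comp
    (tendsto_measure_of_ae_tendsto_indicator_of_isFiniteMeasure atTop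
      (measurableSet_setOfPred.2 (by fun_prop)) (fun t => measurableSet_setOfPred.2 (by fun_prop))
      ?_)
  filter_upwards [hcons, habs 1 (by decide), habs 2 (by decide)] with ω ⟨T, hT⟩ hred hblue
  rcases hT with hT | hT
  · filter_upwards [eventually_ge_atTop T] with t ht
    exact iff_of_true (hred T t ht hT v) ⟨T, hT⟩
  · filter_upwards [eventually_ge_atTop T] with t ht
    have hnot : ∀ t', T ≤ t' → S t' ω v ≠ 1 := fun t' h => by
      rw [hblue T t' h hT v]; decide
    exact iff_of_false (hnot t ht) fun ⟨t', ht'⟩ =>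
      hnot (max T t') (le_max_left _ _) (hred t' _ (le_max_right _ _) ht' v)

end IsVoterProcess

theorem voter_model_red_consensus_probability_general
    {V : Type} [Fintype V] [DecidableEq V]
    (H : V → V → ℝ) (μ : V → ℝ)
    (hH0 : ∀ v w, 0 ≤ H v w) (hH1 : ∀ v, ∑ w, H v w = 1)
    (hμ1 : ∑ v, μ v = 1)
    (hrev : ∀ v w, μ v * H v w = μ w * H w v)
    {Ω : Type} [m : MeasurableSpace Ω] (P : Measure Ω) [IsProbabilityMeasure P]
    (S : ℕ → Ω → (V → Fin 3)) (s₀ : V → Fin 3)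
    (hS : IsVoterProcess P (syncKernel H) S s₀)
    (hconv : P {ω | ∃ t, (∀ v, S t ω v = 1) ∨ (∀ v, S t ω v = 2)} = 1) :
    (P {ω | ∃ t, ∀ v, S t ω v = 1}).toReal
      = ∑ v : V, μ v * (P (redEvent S v)).toReal := by
  have hmeas := hS.1
  have hcons : ∀ᵐ ω ∂P, ∃ t, (∀ v, S t ω v = 1) ∨ (∀ v, S t ω v = 2) :=
    (ae_iff_measure_eq (measurableSet_setOfPred.2 (by fun_prop)).nullMeasurableSet).2
      (by rw [hconv, measure_univ])
  have hred : Tendsto (fun t => ∑ v, μ v * P.real {ω | S t ω v = 1}) atTop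
      (𝓝 (∑ v, μ v * P.real {ω | ∃ t, ∀ v, S t ω v = 1})) :=
    tendsto_finsetSum _ fun v _ =>
      (hS.tendsto_measureReal_red hH0 hcons v).const_mul (μ v)
  have hfirst : Tendsto (fun t => ∑ v, μ v * ∑ i ∈ range (t + 1), P.real (redFirstAt S v i))
      atTop (𝓝 (∑ v, μ v * P.real (redEvent S v))) :=
    tendsto_finsetSum _ fun v _ =>
      ((tendsto_sum_measureReal_redFirstAt hmeas v).comp (tendsto_add_atTop_nat 1)).const_mul (μ v)
  have h := tendsto_nhds_unique (hred.congr (hS.sum_mul_measureReal_red_eq hH0 hH1 hrev)) hfirst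
  rwa [← Finset.sum_mul, hμ1, one_mul] at h

/-- Under reversibility, if the synchronous pull voter model with agnostic
states reaches a monochromatic configuration almost surely, then the probability of red
consensus equals `∑_v μ(v) ⬝ ℙ(R(v) ∣ S_0 = s₀)`. -/
theorem voter_model_red_consensus_probability
    {V : Type} [Fintype V] [DecidableEq V] [Nonempty V]
    (H : V → V → ℝ) (μ : V → ℝ)
    (hH0 : ∀ v w, 0 ≤ H v w) (hH1 : ∀ v, ∑ w, H v w = 1)
    (hμ0 : ∀ v, 0 ≤ μ v) (hμ1 : ∑ v, μ v = 1)
    (hstat : ∀ w, ∑ v, μ v * H v w = μ w)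
    (hrev : ∀ v w, μ v * H v w = μ w * H w v)
    {Ω : Type} [m : MeasurableSpace Ω] (P : Measure Ω) [IsProbabilityMeasure P]
    (S : ℕ → Ω → (V → Fin 3)) (s₀ : V → Fin 3)
    (hS : IsVoterProcess P (syncKernel H) S s₀)
    (hconv : P {ω | ∃ t, (∀ v, S t ω v = 1) ∨ (∀ v, S t ω v = 2)} = 1) :
    (P {ω | ∃ t, ∀ v, S t ω v = 1}).toReal
      = ∑ v : V, μ v * (P (redEvent S v)).toReal :=
  voter_model_red_consensus_probability_general H μ hH0 hH1 hμ1 hrev (m := m) P S s₀ hS hconv
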